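/- Let v, h : ℝ³ → ℝ³ be C² vector fields with div v = 0 and div h = 0, and set ω := curl v, j := curl h. Then curl((v·∇)h − (h·∇)v) = (v·∇)j − (h·∇)ω − (j·∇)v + (ω·∇)h + 2·Σ_{l=1}^{3} ∇v^l × ∇h^l, where v^l, h^l are the Cartesian components of v, h. -/

import Mathlib

/-!
Write `∇u` for the Jacobian matrix `(∂ⱼuⁱ)` and `C(M) = (M₂₁ - M₁₂, M₀₂ - M₂₀, M₁₀ - M₀₁)`,
so that `curl u = C(∇u)`. Since `∇((v·∇)u) = ∇u ∇v + (v·∇)∇u`, the symmetry of second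
derivatives gives `curl((v·∇)u) = (v·∇) curl u + C(∇u ∇v)`. The theorem is thereby reduced to
the identity
`C(BA) - C(AB) = B C(A) - A C(B) + 2 Σₗ Aₗ × Bₗ + (tr A) C(B) - (tr B) C(A)`
for `3 × 3` matrices, applied to `A = ∇v`, `B = ∇h`, whose traces are the divergences.
-/

/-- The `i`-th partial derivative of a scalar function on `ℝ³`. -/
noncomputable def pd (i : Fin 3) (f : (Fin 3 → ℝ) → ℝ) (x : Fin 3 → ℝ) : ℝ :=
  fderiv ℝ f x (Pi.single i 1)

/-- The gradient of a scalar function on `ℝ³`. -/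
noncomputable def grad3 (f : (Fin 3 → ℝ) → ℝ) (x : Fin 3 → ℝ) : Fin 3 → ℝ :=
  fun i => pd i f x

/-- The divergence of a vector field on `ℝ³`. -/
noncomputable def div3 (u : (Fin 3 → ℝ) → (Fin 3 → ℝ)) (x : Fin 3 → ℝ) : ℝ :=
  ∑ i, pd i (fun y => u y i) x

/-- The curl of a vector field on `ℝ³`. -/
noncomputable def curl3 (u : (Fin 3 → ℝ) → (Fin 3 → ℝ)) (x : Fin 3 → ℝ) : Fin 3 → ℝ :=
  ![pd 1 (fun y => u y 2) x - pd 2 (fun y => u y 1) x,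
    pd 2 (fun y => u y 0) x - pd 0 (fun y => u y 2) x,
    pd 0 (fun y => u y 1) x - pd 1 (fun y => u y 0) x]

/-- The advective derivative `(v·∇)u` of a vector field `u` along `v`. -/
noncomputable def advect (v u : (Fin 3 → ℝ) → (Fin 3 → ℝ)) (x : Fin 3 → ℝ) : Fin 3 → ℝ :=
  fun i => ∑ j, v x j * pd j (fun y => u y i) x

/-- The term `tr(∇v × ∇h) = Σ_l ∇v^l × ∇h^l`. -/
noncomputable def mhdF (v h : (Fin 3 → ℝ) → (Fin 3 → ℝ)) (x : Fin 3 → ℝ) : Fin 3 → ℝ :=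
  ∑ l, crossProduct (grad3 (fun y => v y l) x) (grad3 (fun y => h y l) x)

open Matrix Finset

lemma pd_sub {f g : (Fin 3 → ℝ) → ℝ} {x : Fin 3 → ℝ} (hf : DifferentiableAt ℝ f x)
    (hg : DifferentiableAt ℝ g x) (i : Fin 3) :
    pd i (fun y => f y - g y) x = pd i f x - pd i g x := by
  simp only [pd, fderiv_fun_sub hf hg, _root_.sub_apply]

lemma pd_mul {f g : (Fin 3 → ℝ) → ℝ} {x : Fin 3 → ℝ} (hf : DifferentiableAt ℝ f x)
    (hg : DifferentiableAt ℝ g x) (i : Fin 3) :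
    pd i (fun y => f y * g y) x = pd i f x * g x + f x * pd i g x := by
  simp only [pd, fderiv_fun_mul hf hg, _root_.add_apply, _root_.smul_apply, smul_eq_mul]
  ring

lemma pd_sum {F : Fin 3 → (Fin 3 → ℝ) → ℝ} {x : Fin 3 → ℝ}
    (hF : ∀ j, DifferentiableAt ℝ (F j) x) (i : Fin 3) :
    pd i (fun y => ∑ j, F j y) x = ∑ j, pd i (F j) x := by
  simp only [pd, fderiv_fun_sum fun j _ => hF j, _root_.sum_apply]

lemma differentiable_pd {f : (Fin 3 → ℝ) → ℝ} (hf : ContDiff ℝ 2 f) (i : Fin 3) :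
    Differentiable ℝ (pd i f) :=
  ((hf.fderiv_right (by norm_num)).clm_apply contDiff_const).differentiable one_ne_zero

lemma pd_comm {f : (Fin 3 → ℝ) → ℝ} (hf : ContDiff ℝ 2 f) (i j : Fin 3) (x : Fin 3 → ℝ) :
    pd i (pd j f) x = pd j (pd i f) x := by
  have hf' : DifferentiableAt ℝ (fderiv ℝ f) x :=
    (hf.fderiv_right (by norm_num)).differentiable one_ne_zero x
  have pd_pd : ∀ a b : Fin 3,
      pd b (pd a f) x = fderiv ℝ (fderiv ℝ f) x (Pi.single b 1) (Pi.single a 1) := by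
    intro a b
    change fderiv ℝ (fun y => fderiv ℝ f y (Pi.single a 1)) x (Pi.single b 1) = _
    simp [fderiv_clm_apply hf' (differentiableAt_const _)]
  rw [pd_pd, pd_pd]
  exact second_derivative_symmetric
    (fun y => (hf.differentiable (by norm_num) y).hasFDerivAt) hf'.hasFDerivAt _ _

lemma differentiableAt_advect {v u : (Fin 3 → ℝ) → (Fin 3 → ℝ)} {x : Fin 3 → ℝ}
    (hv : DifferentiableAt ℝ v x) (hu : ContDiff ℝ 2 u) : DifferentiableAt ℝ (advect v u) x :=
  differentiableAt_pi.2 fun i => DifferentiableAt.fun_sum fun j _ =>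
    (differentiableAt_pi.1 hv j).mul (differentiable_pd (contDiff_pi.1 hu i) j x)

lemma pd_advect {v u : (Fin 3 → ℝ) → (Fin 3 → ℝ)} {x : Fin 3 → ℝ}
    (hv : DifferentiableAt ℝ v x) (hu : ContDiff ℝ 2 u) (a i : Fin 3) :
    pd a (fun y => advect v u y i) x =
      ∑ j, (pd a (fun y => v y j) x * pd j (fun y => u y i) x
        + v x j * pd a (pd j fun y => u y i) x) := by
  have hvj : ∀ j, DifferentiableAt ℝ (fun y => v y j) x := differentiableAt_pi.1 hv
  have hpd : ∀ j, DifferentiableAt ℝ (pd j fun y => u y i) x :=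
    fun j => differentiable_pd (contDiff_pi.1 hu i) j x
  simp only [advect]
  rw [pd_sum (F := fun j y => v y j * pd j (fun z => u z i) y) fun j => (hvj j).mul (hpd j)]
  exact sum_congr rfl fun j _ => pd_mul (hvj j) (hpd j) a

section JacobianCurl

variable {R : Type*} [CommRing R]

def jacobianCurl (M : Matrix (Fin 3) (Fin 3) R) : Fin 3 → R :=
  ![M 2 1 - M 1 2, M 0 2 - M 2 0, M 1 0 - M 0 1]

lemma jacobianCurl_sub (M N : Matrix (Fin 3) (Fin 3) R) :
    jacobianCurl (M - N) = jacobianCurl M - jacobianCurl N := by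
  ext k; fin_cases k <;> simp [jacobianCurl] <;> ring

lemma jacobianCurl_mul_sub_jacobianCurl_mul (A B : Matrix (Fin 3) (Fin 3) R) :
    jacobianCurl (B * A) - jacobianCurl (A * B) =
      B *ᵥ jacobianCurl A - A *ᵥ jacobianCurl B + (2 : R) • ∑ l, A l ⨯₃ B l
        + trace A • jacobianCurl B - trace B • jacobianCurl A := by
  ext k; fin_cases k <;>
  · simp [jacobianCurl, mul_apply, mulVec, dotProduct, trace_fin_three, Fin.sum_univ_three,
      cross_apply, vecHead, vecTail]
    ring

end JacobianCurl

noncomputable def jacobian3 (u : (Fin 3 → ℝ) → (Fin 3 → ℝ)) (x : Fin 3 → ℝ) :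
    Matrix (Fin 3) (Fin 3) ℝ :=
  Matrix.of fun i j => pd j (fun y => u y i) x

lemma curl3_eq_jacobianCurl (u : (Fin 3 → ℝ) → (Fin 3 → ℝ)) (x : Fin 3 → ℝ) :
    curl3 u x = jacobianCurl (jacobian3 u x) := rfl

lemma div3_eq_trace (u : (Fin 3 → ℝ) → (Fin 3 → ℝ)) (x : Fin 3 → ℝ) :
    div3 u x = trace (jacobian3 u x) := rfl

lemma mhdF_eq_sum_cross (v h : (Fin 3 → ℝ) → (Fin 3 → ℝ)) (x : Fin 3 → ℝ) :
    mhdF v h x = ∑ l, jacobian3 v x l ⨯₃ jacobian3 h x l := rfl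

lemma advect_eq_mulVec (w u : (Fin 3 → ℝ) → (Fin 3 → ℝ)) (x : Fin 3 → ℝ) :
    advect w u x = jacobian3 u x *ᵥ w x := by
  ext i
  simp only [advect, jacobian3, mulVec, dotProduct, of_apply, mul_comm]

lemma jacobian3_sub {f g : (Fin 3 → ℝ) → (Fin 3 → ℝ)} {x : Fin 3 → ℝ}
    (hf : DifferentiableAt ℝ f x) (hg : DifferentiableAt ℝ g x) :
    jacobian3 (fun y => f y - g y) x = jacobian3 f x - jacobian3 g x := by
  ext i j
  exact pd_sub (differentiableAt_pi.1 hf i) (differentiableAt_pi.1 hg i) j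

lemma curl3_sub {f g : (Fin 3 → ℝ) → (Fin 3 → ℝ)} {x : Fin 3 → ℝ}
    (hf : DifferentiableAt ℝ f x) (hg : DifferentiableAt ℝ g x) :
    curl3 (fun y => f y - g y) x = curl3 f x - curl3 g x := by
  simp only [curl3_eq_jacobianCurl, jacobian3_sub hf hg, jacobianCurl_sub]

lemma pd_advect_sub_pd_advect {v u : (Fin 3 → ℝ) → (Fin 3 → ℝ)} {x : Fin 3 → ℝ}
    (hv : DifferentiableAt ℝ v x) (hu : ContDiff ℝ 2 u) (a b : Fin 3) :
    pd a (fun y => advect v u y b) x - pd b (fun y => advect v u y a) x =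
      ∑ j, v x j * pd j (fun y => pd a (fun z => u z b) y - pd b (fun z => u z a) y) x
        + ((jacobian3 u x * jacobian3 v x) b a - (jacobian3 u x * jacobian3 v x) a b) := by
  have hpd : ∀ i j, DifferentiableAt ℝ (pd j fun y => u y i) x :=
    fun i j => differentiable_pd (contDiff_pi.1 hu i) j x
  simp only [pd_advect hv hu, pd_sub (hpd _ _) (hpd _ _), pd_comm (contDiff_pi.1 hu _) _ a,
    pd_comm (contDiff_pi.1 hu _) _ b, mul_apply, jacobian3, of_apply, ← sum_sub_distrib,
    ← sum_add_distrib]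
  exact sum_congr rfl fun j _ => by ring

lemma curl3_advect {v u : (Fin 3 → ℝ) → (Fin 3 → ℝ)} {x : Fin 3 → ℝ}
    (hv : DifferentiableAt ℝ v x) (hu : ContDiff ℝ 2 u) :
    curl3 (advect v u) x =
      advect v (curl3 u) x + jacobianCurl (jacobian3 u x * jacobian3 v x) := by
  ext k
  fin_cases k <;> exact pd_advect_sub_pd_advect hv hu _ _

/-- Curl identity underlying the current evolution equation in ideal MHD. -/
theorem stmt9 (v h : (Fin 3 → ℝ) → (Fin 3 → ℝ))
    (hv : ContDiff ℝ 2 v) (hh : ContDiff ℝ 2 h)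
    (hdivv : ∀ x, div3 v x = 0) (hdivh : ∀ x, div3 h x = 0) :
    ∀ x, curl3 (fun y => advect v h y - advect h v y) x =
      advect v (curl3 h) x - advect h (curl3 v) x
        - advect (curl3 h) v x + advect (curl3 v) h x + (2 : ℝ) • mhdF v h x := by
  intro x
  have hv' : DifferentiableAt ℝ v x := hv.differentiable (by norm_num) x
  have hh' : DifferentiableAt ℝ h x := hh.differentiable (by norm_num) x
  have hmatrix := jacobianCurl_mul_sub_jacobianCurl_mul (jacobian3 v x) (jacobian3 h x)
  rw [← div3_eq_trace, ← div3_eq_trace, hdivv, hdivh, ← curl3_eq_jacobianCurl,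
    ← curl3_eq_jacobianCurl, ← mhdF_eq_sum_cross, ← advect_eq_mulVec, ← advect_eq_mulVec] at hmatrix
  rw [curl3_sub (differentiableAt_advect hv' hh) (differentiableAt_advect hh' hv),
    curl3_advect hv' hh, curl3_advect hh' hv]
  linear_combination (norm := module) hmatrix
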